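/- arXiv:2505.18808 — 3 statements merged into one kernel-verified Lean document; each statement's English description precedes it below -/
import Mathlib

section
/- Let q > 0 and let f : [0,∞) → [0,∞) be a continuous function which is coarsely non-decreasing with constant q. Let 𝓕 be the family of all non-decreasing continuous functions g : [0,∞) → [0,∞) with g(x) ≥ f(x) for all x ≥ 0, and define F(x) = inf{g(x) : g ∈ 𝓕}. Then 𝓕 is nonempty, and F is non-decreasing, continuous, and satisfies f(x) ≤ F(x) ≤ f(x) + q + 1 for all x ≥ 0. -/
/-- Let `q > 0` and let `f : [0,∞) → [0,∞)` be continuous and coarsely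
non-decreasing with constant `q`.  Let `𝓕` be the family of all non-decreasing continuous
functions `g : [0,∞) → [0,∞)` with `g ≥ f` on `[0,∞)`, and let `F x = inf {g x | g ∈ 𝓕}`.
Then `𝓕` is nonempty, and `F` is non-decreasing, continuous, and satisfies
`f x ≤ F x ≤ f x + q + 1` for all `x ≥ 0`. -/
theorem stmt0 (q : ℝ) (hq : 0 < q) (f : ℝ → ℝ)
    (hf_cont : ContinuousOn f (Set.Ici 0))
    (hf_nonneg : ∀ x ∈ Set.Ici (0 : ℝ), 0 ≤ f x)
    (hf_coarse : ∀ x y : ℝ, 0 ≤ x → x ≤ y → f x - q ≤ f y)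
    (𝓕 : Set (ℝ → ℝ))
    (h𝓕 : 𝓕 = {g : ℝ → ℝ | MonotoneOn g (Set.Ici 0) ∧ ContinuousOn g (Set.Ici 0) ∧
      (∀ x ∈ Set.Ici (0 : ℝ), 0 ≤ g x) ∧ (∀ x ∈ Set.Ici (0 : ℝ), f x ≤ g x)})
    (F : ℝ → ℝ)
    (hF : ∀ x : ℝ, F x = sInf ((fun g : ℝ → ℝ => g x) '' 𝓕)) :
    𝓕.Nonempty ∧ MonotoneOn F (Set.Ici 0) ∧ ContinuousOn F (Set.Ici 0) ∧
      ∀ x ∈ Set.Ici (0 : ℝ), f x ≤ F x ∧ F x ≤ f x + q + 1 := by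
  -- the running maximum of `f`
  set M : ℝ → ℝ := fun x => sSup (f '' Set.Icc 0 x) with hMdef
  -- the supremum is attained
  have hmax : ∀ x : ℝ, 0 ≤ x → ∃ t ∈ Set.Icc (0:ℝ) x, M x = f t ∧
      ∀ s ∈ Set.Icc (0:ℝ) x, f s ≤ f t := by
    intro x hx
    obtain ⟨t, ht, htmax⟩ := isCompact_Icc.exists_isMaxOn (Set.nonempty_Icc.2 hx)
      (hf_cont.mono (fun s hs => hs.1))
    refine ⟨t, ht, ?_, fun s hs => htmax hs⟩
    refine IsGreatest.csSup_eq ⟨Set.mem_image_of_mem f ht, ?_⟩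
    rintro y ⟨s, hs, rfl⟩
    exact htmax hs
  have hfM : ∀ x : ℝ, 0 ≤ x → f x ≤ M x := by
    intro x hx
    obtain ⟨t, _, hMt, hmax'⟩ := hmax x hx
    rw [hMt]
    exact hmax' x ⟨hx, le_refl x⟩
  have hMmono : MonotoneOn M (Set.Ici 0) := by
    intro x hx y hy hxy
    obtain ⟨t, ht, hMt, _⟩ := hmax x hx
    obtain ⟨s, hs, hMs, hsmax⟩ := hmax y hy
    rw [hMt, hMs]
    exact hsmax t ⟨ht.1, le_trans ht.2 hxy⟩
  have hMle : ∀ x : ℝ, 0 ≤ x → M x ≤ f x + q := by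
    intro x hx
    obtain ⟨t, ht, hMt, _⟩ := hmax x hx
    rw [hMt]
    have := hf_coarse t x ht.1 ht.2
    linarith
  have hM0 : ∀ x : ℝ, 0 ≤ x → 0 ≤ M x := fun x hx =>
    le_trans (hf_nonneg x hx) (hfM x hx)
  -- continuity of the running maximum
  have hMcont : ContinuousOn M (Set.Ici 0) := by
    intro x₀ hx₀
    rw [Metric.continuousWithinAt_iff]
    intro ε hε
    have hc := hf_cont x₀ hx₀
    rw [Metric.continuousWithinAt_iff] at hc
    obtain ⟨δ, hδ, hδ'⟩ := hc (ε/2) (by linarith)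
    refine ⟨δ, hδ, ?_⟩
    intro y hy hyd
    have hx₀' : (0:ℝ) ≤ x₀ := hx₀
    have hy' : (0:ℝ) ≤ y := hy
    rw [Real.dist_eq] at hyd ⊢
    rw [abs_sub_lt_iff]
    constructor
    · -- M y < M x₀ + ε
      obtain ⟨t, ht, hMt, _⟩ := hmax y hy'
      rw [hMt]
      by_cases htx : t ≤ x₀
      · obtain ⟨s, hs, hMs, hsmax⟩ := hmax x₀ hx₀'
        have : f t ≤ M x₀ := by rw [hMs]; exact hsmax t ⟨ht.1, htx⟩
        linarith
      · push_neg at htx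
        have htd : dist t x₀ < δ := by
          rw [Real.dist_eq, abs_of_pos (by linarith : (0:ℝ) < t - x₀)]
          have : t ≤ y := ht.2
          have : |y - x₀| < δ := hyd
          rw [abs_lt] at this
          linarith
        have := hδ' ht.1 htd
        rw [Real.dist_eq, abs_sub_lt_iff] at this
        have hfx₀M : f x₀ ≤ M x₀ := hfM x₀ hx₀'
        linarith [this.1]
    · -- M x₀ < M y + ε
      obtain ⟨s, hs, hMs, _⟩ := hmax x₀ hx₀'
      rw [hMs]
      by_cases hsy : s ≤ y
      · obtain ⟨t, ht, hMt, htmax⟩ := hmax y hy'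
        have : f s ≤ M y := by rw [hMt]; exact htmax s ⟨hs.1, hsy⟩
        linarith
      · push_neg at hsy
        have hsd : dist s x₀ < δ := by
          rw [Real.dist_eq, abs_of_nonpos (by linarith [hs.2] : s - x₀ ≤ 0)]
          rw [abs_lt] at hyd
          linarith [hs.2]
        have h1 := hδ' hs.1 hsd
        rw [Real.dist_eq, abs_sub_lt_iff] at h1
        have h2 := hδ' hy' (by rw [Real.dist_eq]; exact hyd)
        rw [Real.dist_eq, abs_sub_lt_iff] at h2
        have hfyM : f y ≤ M y := hfM y hy'
        linarith [h1.1, h2.2]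
  -- M belongs to the family
  have h𝓕M : M ∈ 𝓕 := by
    rw [h𝓕]
    exact ⟨hMmono, hMcont, fun x hx => hM0 x hx, fun x hx => hfM x hx⟩
  -- F equals M on [0,∞)
  have hFM : ∀ x : ℝ, 0 ≤ x → F x = M x := by
    intro x hx
    rw [hF]
    apply le_antisymm
    · apply csInf_le
      · refine ⟨0, ?_⟩
        rintro _ ⟨g, hg, rfl⟩
        rw [h𝓕] at hg
        exact hg.2.2.1 x hx
      · exact ⟨M, h𝓕M, rfl⟩
    · have hne : ((fun g : ℝ → ℝ => g x) '' 𝓕).Nonempty := ⟨M x, M, h𝓕M, rfl⟩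
      apply le_csInf hne
      rintro _ ⟨g, hg, rfl⟩
      rw [h𝓕] at hg
      obtain ⟨t, ht, hMt, _⟩ := hmax x hx
      rw [hMt]
      calc f t ≤ g t := hg.2.2.2 t ht.1
        _ ≤ g x := hg.1 ht.1 hx ht.2
  refine ⟨⟨M, h𝓕M⟩, ?_, ?_, ?_⟩
  · intro x hx y hy hxy
    rw [hFM x hx, hFM y hy]
    exact hMmono hx hy hxy
  · exact hMcont.congr (fun x hx => hFM x hx)
  · intro x hx
    rw [hFM x hx]
    exact ⟨hfM x hx, by linarith [hMle x hx]⟩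
end

section
/- Let q > 0 and let f : [0,∞) → [0,∞) be a continuous function which is coarsely non-decreasing with constant q. Let 𝓕 be the family of all non-decreasing continuous functions g : [0,∞) → [0,∞) with g(x) ≥ f(x) for all x ≥ 0, and define F(x) = inf{g(x) : g ∈ 𝓕}. Then F(x) ≤ f(x) + q + 1 for every x ≥ 0. -/
/-- With `q`, `f`, `𝓕` and `F` as in the construction of the monotone
envelope (Lemma `monotone` of the paper), one has `F x ≤ f x + q + 1` for every `x ≥ 0`. -/
theorem stmt2 (q : ℝ) (hq : 0 < q) (f : ℝ → ℝ)
    (hf_cont : ContinuousOn f (Set.Ici 0))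
    (hf_nonneg : ∀ x ∈ Set.Ici (0 : ℝ), 0 ≤ f x)
    (hf_coarse : ∀ x y : ℝ, 0 ≤ x → x ≤ y → f x - q ≤ f y)
    (𝓕 : Set (ℝ → ℝ))
    (h𝓕 : 𝓕 = {g : ℝ → ℝ | MonotoneOn g (Set.Ici 0) ∧ ContinuousOn g (Set.Ici 0) ∧
      (∀ x ∈ Set.Ici (0 : ℝ), 0 ≤ g x) ∧ (∀ x ∈ Set.Ici (0 : ℝ), f x ≤ g x)})
    (F : ℝ → ℝ)
    (hF : ∀ x : ℝ, F x = sInf ((fun g : ℝ → ℝ => g x) '' 𝓕)) :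
    ∀ x ∈ Set.Ici (0 : ℝ), F x ≤ f x + q + 1 := by
  -- the running maximum of f
  set g : ℝ → ℝ := fun t => sSup (f '' Set.Icc 0 (max t 0)) with hg
  have hne : ∀ t : ℝ, (f '' Set.Icc 0 (max t 0)).Nonempty := by
    intro t
    exact ⟨f 0, Set.mem_image_of_mem f ⟨le_refl 0, le_max_right t 0⟩⟩
  have hbdd : ∀ t : ℝ, BddAbove (f '' Set.Icc 0 (max t 0)) := by
    intro t
    exact (isCompact_Icc.image_of_continuousOn
      (hf_cont.mono (fun u hu => hu.1))).bddAbove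
  have hle : ∀ t : ℝ, ∀ u ∈ Set.Icc (0:ℝ) (max t 0), f u ≤ g t := by
    intro t u hu
    exact le_csSup (hbdd t) (Set.mem_image_of_mem f hu)
  have hmono : MonotoneOn g (Set.Ici 0) := by
    intro s hs t ht hst
    refine csSup_le (hne s) ?_
    rintro y ⟨u, hu, rfl⟩
    exact hle t u ⟨hu.1, hu.2.trans (max_le_max hst le_rfl)⟩
  have hgef : ∀ t ∈ Set.Ici (0:ℝ), f t ≤ g t := by
    intro t ht
    exact hle t t ⟨ht, le_max_left t 0⟩
  have hgnonneg : ∀ t ∈ Set.Ici (0:ℝ), 0 ≤ g t := by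
    intro t ht
    exact (hf_nonneg 0 (Set.mem_Ici.mpr le_rfl)).trans (hle t 0 ⟨le_rfl, le_max_right t 0⟩)
  have hgle : ∀ t ∈ Set.Ici (0:ℝ), g t ≤ f t + q := by
    intro t ht
    refine csSup_le (hne t) ?_
    rintro y ⟨u, hu, rfl⟩
    have hu2 : u ≤ t := hu.2.trans_eq (max_eq_left ht)
    have := hf_coarse u t hu.1 hu2
    linarith
  -- continuity of g on Ici 0
  have hgcont : ContinuousOn g (Set.Ici 0) := by
    intro t ht
    rw [Metric.continuousWithinAt_iff]
    intro ε hε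
    have hft : ContinuousWithinAt f (Set.Ici 0) t := hf_cont t ht
    rw [Metric.continuousWithinAt_iff] at hft
    obtain ⟨δ, hδ, hδ'⟩ := hft (ε/3) (by linarith)
    refine ⟨δ, hδ, ?_⟩
    intro s hs hsd
    have ht' : (0:ℝ) ≤ t := ht
    have hs' : (0:ℝ) ≤ s := hs
    have hmax_s : max s 0 = s := max_eq_left hs'
    have hmax_t : max t 0 = t := max_eq_left ht'
    -- key: for u between, f u is close to f t
    have key : ∀ u : ℝ, 0 ≤ u → |u - t| < δ → f u ≤ f t + ε/3 := by
      intro u hu hud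
      have := hδ' hu (by rwa [Real.dist_eq])
      rw [Real.dist_eq, abs_sub_lt_iff] at this
      linarith [this.1]
    rcases le_total s t with hst | hst
    · -- s ≤ t : g s ≤ g t and g t ≤ g s + 2ε/3
      have h1 : g s ≤ g t := hmono hs ht hst
      have hfts : f t ≤ f s + ε/3 := by
        have := hδ' hs' hsd
        rw [Real.dist_eq, abs_sub_lt_iff] at this
        linarith [this.2]
      have h2 : g t ≤ g s + 2*(ε/3) := by
        refine csSup_le (hne t) ?_
        rintro y ⟨u, hu, rfl⟩
        rcases le_total u s with hus | hus
        · have := hle s u ⟨hu.1, hus.trans (le_max_left s 0)⟩; linarith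
        · have hut : u ≤ t := hu.2.trans_eq hmax_t
          have hud : |u - t| < δ := by
            rw [Real.dist_eq] at hsd
            rw [abs_sub_lt_iff] at hsd ⊢
            constructor <;> linarith [hsd.1, hsd.2]
          have h3 : f u ≤ f t + ε/3 := key u hu.1 hud
          have h4 : f s ≤ g s := hgef s hs'
          linarith
      rw [Real.dist_eq, abs_sub_lt_iff]
      constructor <;> linarith
    · -- t ≤ s : g t ≤ g s and g s ≤ g t + ε/3
      have h1 : g t ≤ g s := hmono ht hs hst
      have h2 : g s ≤ g t + ε/3 := by
        refine csSup_le (hne s) ?_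
        rintro y ⟨u, hu, rfl⟩
        rcases le_total u t with hut | hut
        · have := hle t u ⟨hu.1, hut.trans (le_max_left t 0)⟩; linarith
        · have hus : u ≤ s := hu.2.trans_eq hmax_s
          have hud : |u - t| < δ := by
            rw [Real.dist_eq] at hsd
            rw [abs_sub_lt_iff] at hsd ⊢
            constructor <;> linarith [hsd.1, hsd.2]
          have h3 : f u ≤ f t + ε/3 := key u hu.1 hud
          have h4 : f t ≤ g t := hgef t ht'
          linarith
      rw [Real.dist_eq, abs_sub_lt_iff]
      constructor <;> linarith
  have hgmem : g ∈ 𝓕 := by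
    rw [h𝓕]
    exact ⟨hmono, hgcont, hgnonneg, hgef⟩
  intro x hx
  rw [hF]
  have hbddF : BddBelow ((fun g : ℝ → ℝ => g x) '' 𝓕) := by
    refine ⟨0, ?_⟩
    rintro y ⟨g', hg', rfl⟩
    rw [h𝓕] at hg'
    exact hg'.2.2.1 x hx
  have : sInf ((fun g : ℝ → ℝ => g x) '' 𝓕) ≤ g x :=
    csInf_le hbddF (Set.mem_image_of_mem _ hgmem)
  have := hgle x hx
  linarith
end

section
/- Let f : [0,∞) → [0,∞) be a continuous, non-decreasing, unbounded function with f(0) = 0. Then there exists a continuous, strictly increasing, surjective function g : [0,∞) → [0,∞) (hence a homeomorphism of [0,∞) onto itself) such that |f(t) − g(t)| ≤ 1 for all t ≥ 0. -/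
/-- Let `f : [0,∞) → [0,∞)` be continuous, non-decreasing, unbounded, with
`f 0 = 0`.  Then there exists a continuous, strictly increasing function `g` mapping `[0,∞)`
bijectively onto `[0,∞)` (hence a homeomorphism of `[0,∞)` onto itself) with
`|f t - g t| ≤ 1` for all `t ≥ 0`. -/
theorem stmt3 (f : ℝ → ℝ)
    (hf_cont : ContinuousOn f (Set.Ici 0))
    (hf_nonneg : ∀ t ∈ Set.Ici (0 : ℝ), 0 ≤ f t)
    (hf_mono : MonotoneOn f (Set.Ici 0))
    (hf_unbdd : ∀ M : ℝ, ∃ t ∈ Set.Ici (0 : ℝ), M < f t)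
    (hf0 : f 0 = 0) :
    ∃ g : ℝ → ℝ, ContinuousOn g (Set.Ici 0) ∧ StrictMonoOn g (Set.Ici 0) ∧
      Set.BijOn g (Set.Ici 0) (Set.Ici 0) ∧
      ∀ t ∈ Set.Ici (0 : ℝ), |f t - g t| ≤ 1 := by
  set g : ℝ → ℝ := fun t => f t + (1 - Real.exp (-t)) with hg
  have hcont : ContinuousOn g (Set.Ici 0) :=
    hf_cont.add (by fun_prop)
  have hsm : StrictMonoOn g (Set.Ici 0) := by
    intro x hx y hy hxy
    have h1 : f x ≤ f y := hf_mono hx hy hxy.le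
    have h2 : Real.exp (-y) < Real.exp (-x) := Real.exp_lt_exp.2 (by linarith)
    simp only [hg]
    linarith
  have hnn : ∀ t ∈ Set.Ici (0 : ℝ), 0 ≤ g t := by
    intro t ht
    have h1 := hf_nonneg t ht
    have h2 : Real.exp (-t) ≤ 1 := Real.exp_le_one_iff.2 (by simpa using ht)
    simp only [hg]; linarith
  have hg0 : g 0 = 0 := by simp [hg, hf0]
  refine ⟨g, hcont, hsm, ⟨hnn, hsm.injOn, ?_⟩, ?_⟩
  · -- surjectivity
    intro y hy
    obtain ⟨T, hT, hfT⟩ := hf_unbdd y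
    have hgT : y ≤ g T := by
      have h2 : Real.exp (-T) ≤ 1 := Real.exp_le_one_iff.2 (by simpa using hT)
      simp only [hg]; linarith
    have hsub : Set.Icc (0 : ℝ) T ⊆ Set.Ici 0 := fun x hx => hx.1
    have := intermediate_value_Icc hT (hcont.mono hsub)
    have hy' : y ∈ Set.Icc (g 0) (g T) := ⟨by rw [hg0]; exact hy, hgT⟩
    obtain ⟨t, ht, hgt⟩ := this hy'
    exact ⟨t, hsub ht, hgt⟩
  · intro t ht
    have h2 : Real.exp (-t) ≤ 1 := Real.exp_le_one_iff.2 (by simpa using ht)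
    have h3 : 0 < Real.exp (-t) := Real.exp_pos _
    have : f t - g t = -(1 - Real.exp (-t)) := by simp [hg]
    rw [this, abs_neg, abs_of_nonneg (by linarith)]
    linarith
end
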